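/- Let n > d > 0 be integers, y ∈ ℝ^n nonzero, P a symmetric projection of rank d, ρ = ‖y − Py‖²/‖y‖² with 0 < ρ < 1 and 1 − ρ > d/n. Define f(α) = (n/2)·log(ρ + α) − (d/2)·log α − ((n−d)/2)·log(1+α) for α > 0. Then f attains its minimum at α_m = ρd/((1−ρ)n − d), and f(α_m) = −(n/2)·KL(d/n ‖ 1−ρ), where KL(p‖q) = p·log(p/q) + (1−p)·log((1−p)/(1−q)). -/

import Mathlib

/-!
Write `p = d/n` and `q = 1 - ρ`. Then `ρ + α = p · (α q / p) + (1 - p) · ((1 + α) ρ / (1 - p))`,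
so concavity of `log` gives `log (ρ + α) ≥ p log α + (1 - p) log (1 + α) - KL(p ‖ q)`, that is
`f α ≥ -(n/2) KL(p ‖ q)`. Equality holds exactly when the two averaged points coincide, which
happens at `α = ρ p / (q - p) = α_m`.
-/

open Real

noncomputable def klBern (p q : ℝ) : ℝ :=
  p * log (p / q) + (1 - p) * log ((1 - p) / (1 - q))

/-- `f α = (n/2) · normalizedLossRank ρ (d/n) α`. -/
noncomputable def normalizedLossRank (ρ p α : ℝ) : ℝ :=
  log (ρ + α) - p * log α - (1 - p) * log (1 + α)

section

variable {ρ p α : ℝ}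

theorem normalizedLossRank_add_klBern (hp0 : 0 < p) (hp1 : p < 1) (hρ0 : 0 < ρ) (hρ1 : ρ < 1)
    (hα : 0 < α) :
    normalizedLossRank ρ p α + klBern p (1 - ρ) =
      log (ρ + α) - (p * log (α * (1 - ρ) / p) + (1 - p) * log ((1 + α) * ρ / (1 - p))) := by
  have hq : 1 - ρ ≠ 0 := by linarith
  have hp' : 1 - p ≠ 0 := by linarith
  have hα' : 1 + α ≠ 0 := by linarith
  rw [normalizedLossRank, klBern, sub_sub_cancel,
    log_div (mul_ne_zero hα.ne' hq) hp0.ne', log_mul hα.ne' hq,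
    log_div (mul_ne_zero hα' hρ0.ne') hp', log_mul hα' hρ0.ne',
    log_div hp0.ne' hq, log_div hp' hρ0.ne']
  ring

theorem weighted_mean_eq_add (hp0 : 0 < p) (hp1 : p < 1) :
    p * (α * (1 - ρ) / p) + (1 - p) * ((1 + α) * ρ / (1 - p)) = ρ + α := by
  field_simp [hp0.ne', (sub_pos.2 hp1).ne']
  ring

theorem neg_klBern_le_normalizedLossRank (hp0 : 0 < p) (hp1 : p < 1) (hρ0 : 0 < ρ)
    (hρ1 : ρ < 1) (hα : 0 < α) :
    -klBern p (1 - ρ) ≤ normalizedLossRank ρ p α := by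
  have hx : 0 < α * (1 - ρ) / p := by have := sub_pos.2 hρ1; positivity
  have hy : 0 < (1 + α) * ρ / (1 - p) := by have := sub_pos.2 hp1; positivity
  have hconcave := strictConcaveOn_log_Ioi.concaveOn.2 hx hy hp0.le (sub_pos.2 hp1).le
    (add_sub_cancel p 1)
  simp only [smul_eq_mul] at hconcave
  rw [weighted_mean_eq_add hp0 hp1] at hconcave
  linarith [normalizedLossRank_add_klBern hp0 hp1 hρ0 hρ1 hα]

theorem normalizedLossRank_eq_neg_klBern (hp0 : 0 < p) (hρ0 : 0 < ρ) (hpρ : p < 1 - ρ) :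
    normalizedLossRank ρ p (ρ * p / (1 - ρ - p)) = -klBern p (1 - ρ) := by
  have hp1 : p < 1 := by linarith
  have hs : 0 < 1 - ρ - p := by linarith
  set α := ρ * p / (1 - ρ - p) with hα_def
  have hα : 0 < α := by positivity
  -- at `α` both points averaged in the concavity bound equal `ρ + α`
  have hc : ρ + α = ρ * (1 - ρ) / (1 - ρ - p) := by rw [hα_def]; field_simp; ring
  have hx : α * (1 - ρ) / p = ρ + α := by rw [hc, hα_def]; field_simp
  have hy : (1 + α) * ρ / (1 - p) = ρ + α := by
    rw [hc, hα_def]; field_simp [(sub_pos.2 hp1).ne']; ring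
  have hsum := normalizedLossRank_add_klBern hp0 hp1 hρ0 (by linarith) hα
  rw [hx, hy] at hsum
  linarith

end

theorem lorp_projective_min_general (n d : ℕ) (hd : 0 < d) (hdn : d < n)
    (ρ : ℝ)
    (hρ0 : 0 < ρ) (hcond : (d : ℝ) / n < 1 - ρ)
    (f : ℝ → ℝ)
    (hf : f = fun α => (n : ℝ) / 2 * log (ρ + α) - (d : ℝ) / 2 * log α
        - ((n : ℝ) - d) / 2 * log (1 + α))
    (αm : ℝ) (hαm : αm = ρ * d / ((1 - ρ) * n - d)) :
    IsMinOn f (Set.Ioi 0) αm ∧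
      f αm = -((n : ℝ) / 2) *
        ((d : ℝ) / n * log (((d : ℝ) / n) / (1 - ρ))
          + (1 - (d : ℝ) / n) * log ((1 - (d : ℝ) / n) / (1 - (1 - ρ)))) := by
  have hn : (0 : ℝ) < n := by exact_mod_cast hd.trans hdn
  have hp0 : (0 : ℝ) < d / n := div_pos (by exact_mod_cast hd) hn
  have hf' (α : ℝ) : f α = (n : ℝ) / 2 * normalizedLossRank ρ (d / n) α := by
    rw [hf, normalizedLossRank]; field_simp
  have hαm' : αm = ρ * (d / n) / (1 - ρ - d / n) := by
    have : (0 : ℝ) < 1 - ρ - d / n := by linarith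
    rw [hαm]; field_simp
  have hmin : f αm = -((n : ℝ) / 2) * klBern (d / n) (1 - ρ) := by
    rw [hf', hαm', normalizedLossRank_eq_neg_klBern hp0 hρ0 hcond]; ring
  refine ⟨isMinOn_iff.2 fun α (hα : 0 < α) => ?_, hmin⟩
  rw [hmin, hf', neg_mul, ← mul_neg]
  exact mul_le_mul_of_nonneg_left
    (neg_klBern_le_normalizedLossRank hp0 (by linarith) hρ0 (by linarith) hα) (by positivity)

theorem lorp_projective_min (n d : ℕ) (hd : 0 < d) (hdn : d < n)
    (y : Fin n → ℝ) (hy : y ≠ 0)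
    (P : Matrix (Fin n) (Fin n) ℝ) (hsym : P.IsSymm) (hproj : P * P = P)
    (htr : P.trace = (d : ℝ))
    (ρ : ℝ) (hρ : ρ = ((y - P.mulVec y) ⬝ᵥ (y - P.mulVec y)) / (y ⬝ᵥ y))
    (hρ0 : 0 < ρ) (hρ1 : ρ < 1) (hcond : (d : ℝ) / n < 1 - ρ)
    (f : ℝ → ℝ)
    (hf : f = fun α => (n : ℝ) / 2 * log (ρ + α) - (d : ℝ) / 2 * log α
        - ((n : ℝ) - d) / 2 * log (1 + α))
    (αm : ℝ) (hαm : αm = ρ * d / ((1 - ρ) * n - d)) :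
    IsMinOn f (Set.Ioi 0) αm ∧
      f αm = -((n : ℝ) / 2) *
        ((d : ℝ) / n * log (((d : ℝ) / n) / (1 - ρ))
          + (1 - (d : ℝ) / n) * log ((1 - (d : ℝ) / n) / (1 - (1 - ρ)))) :=
  lorp_projective_min_general n d hd hdn ρ hρ0 hcond f hf αm hαm
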